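/- arXiv:0804.4223 — 7 statements merged into one kernel-verified Lean document; each statement's English description precedes it below -/
import Mathlib

section
/- Let A be a 2×2 integer matrix with determinant 1 whose trace t lies in {−1, 0, 1}. Then there exists P ∈ GL(2, ℤ) (an invertible integer matrix whose inverse also has integer entries) such that P⁻¹AP equals [[0,1],[−1,−1]] if t = −1, equals [[0,1],[−1,0]] if t = 0, and equals [[0,1],[−1,1]] if t = 1. -/
/-!
If `A ∈ SL(2, ℤ)` has trace `t`, then for every `v ∈ ℤ²` the matrix `P = [v | -A v]` satisfies
`A P = P [[0,1],[-1,t]]` by Cayley–Hamilton, and `det P` is (up to sign) the value at `v` of a binary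
quadratic form of discriminant `t² - 4`. Lagrange reduction shows that every integral form of
discriminant in `(-12, 0)` represents a unit: once `|β| ≤ |α|`, the outer coefficients satisfy
`4 |α γ| = β² - D < 4 α²` unless `|α| = 1`. So for `|t| ≤ 1` some `P = [v | -A v]` lies in `GL(2, ℤ)`.
-/

open Matrix

lemma Int.exists_abs_add_two_mul_mul_le (β : ℤ) {α : ℤ} (hα : α ≠ 0) :
    ∃ k : ℤ, |β + 2 * α * k| ≤ |α| := by
  have h2α : 2 * α ≠ 0 := mul_ne_zero two_ne_zero hα
  refine ⟨-((β + |α|) / (2 * α)), abs_le.mpr ?_⟩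
  have hdiv := Int.mul_ediv_add_emod (β + |α|) (2 * α)
  have hlo := Int.emod_nonneg (β + |α|) h2α
  have hhi := Int.emod_lt (β + |α|) h2α
  rw [Int.natCast_natAbs, abs_mul, abs_two] at hhi
  constructor <;> linarith

lemma discrim_shift {R : Type*} [CommRing R] (α β γ k : R) :
    discrim α (β + 2 * α * k) (α * k ^ 2 + β * k + γ) = discrim α β γ := by
  unfold discrim; ring

lemma discrim_comm {R : Type*} [CommRing R] (a b c : R) : discrim a b c = discrim c b a := by
  unfold discrim; ring

lemma abs_lt_abs_of_discrim {α β γ : ℤ} (hβ : |β| ≤ |α|) (hα : 2 ≤ |α|)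
    (hneg : discrim α β γ < 0) (hgt : -12 < discrim α β γ) : |γ| < |α| := by
  unfold discrim at hneg hgt
  have hαγ : α * γ = |α| * |γ| := by rw [← abs_mul, abs_of_pos (by linarith [sq_nonneg β])]
  have hβ2 : β ^ 2 ≤ |α| ^ 2 := by rw [← sq_abs β]; gcongr
  nlinarith [sq_abs α, abs_nonneg γ]

theorem exists_isUnit_of_discrim (α β γ : ℤ) (hneg : discrim α β γ < 0)
    (hgt : -12 < discrim α β γ) : ∃ x y : ℤ, IsUnit (α * x ^ 2 + β * x * y + γ * y ^ 2) := by
  induction hn : α.natAbs using Nat.strong_induction_on generalizing α β γ with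
  | _ n ih =>
    have hα : α ≠ 0 := by
      rintro rfl
      unfold discrim at hneg
      nlinarith [sq_nonneg β]
    by_cases hα1 : α.natAbs = 1
    · exact ⟨1, 0, by simpa [Int.isUnit_iff_natAbs_eq] using hα1⟩
    obtain ⟨k, hk⟩ := Int.exists_abs_add_two_mul_mul_le β hα
    have hα2 : 2 ≤ |α| := by rw [Int.abs_eq_natAbs]; omega
    rw [← discrim_shift α β γ k] at hneg hgt
    have hlt := abs_lt_abs_of_discrim hk hα2 hneg hgt
    rw [Int.abs_eq_natAbs, Int.abs_eq_natAbs] at hlt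
    rw [discrim_comm] at hneg hgt
    -- `(x, y) ↦ (y + k x, x)` maps the reduced form `(γ + β k + α k², β + 2 α k, α)` to `(α, β, γ)`.
    obtain ⟨x, y, hxy⟩ := ih _ (by omega) _ _ _ hneg hgt rfl
    exact ⟨y + k * x, x, by convert hxy using 1; ring⟩

section CyclicMatrix

variable {R : Type*} [CommRing R]

def cyclicMatrix (A : Matrix (Fin 2) (Fin 2) R) (v : Fin 2 → R) : Matrix (Fin 2) (Fin 2) R :=
  !![v 0, -(A *ᵥ v) 0; v 1, -(A *ᵥ v) 1]

lemma mul_cyclicMatrix {A : Matrix (Fin 2) (Fin 2) R} (hA : A.det = 1) (v : Fin 2 → R) :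
    A * cyclicMatrix A v = cyclicMatrix A v * !![0, 1; -1, A.trace] := by
  rw [det_fin_two] at hA
  ext i j
  fin_cases i <;> fin_cases j <;>
    simp only [cyclicMatrix, mulVec, dotProduct, Fin.sum_univ_two, mul_apply, of_apply, cons_val',
      cons_val_zero, cons_val_one, cons_val_fin_one, Fin.isValue, Fin.zero_eta, Fin.mk_one,
      trace_fin_two, mul_zero, mul_neg, mul_one, neg_neg, neg_add_rev, zero_add]
  · linear_combination v 0 * hA
  · linear_combination v 1 * hA

lemma det_cyclicMatrix (A : Matrix (Fin 2) (Fin 2) R) (v : Fin 2 → R) :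
    (cyclicMatrix A v).det =
      -(A 1 0 * v 0 ^ 2 + (A 1 1 - A 0 0) * v 0 * v 1 + -A 0 1 * v 1 ^ 2) := by
  simp only [cyclicMatrix, det_fin_two, mulVec, dotProduct, Fin.sum_univ_two, of_apply, cons_val',
    cons_val_zero, cons_val_one, cons_val_fin_one, Fin.isValue]
  ring

lemma discrim_eq_trace_sq_sub (A : Matrix (Fin 2) (Fin 2) R) :
    discrim (A 1 0) (A 1 1 - A 0 0) (-A 0 1) = A.trace ^ 2 - 4 * A.det := by
  rw [discrim, trace_fin_two, det_fin_two]
  ring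

end CyclicMatrix

lemma Units.inv_mul_mul_eq_of_mul_eq {M : Type*} [Monoid M] {a c : M} (u : Mˣ)
    (h : a * u = u * c) : ↑u⁻¹ * a * u = c := by
  rw [mul_assoc, h, Units.inv_mul_cancel_left]

theorem exists_conj_eq_of_trace_sq_lt_four (A : Matrix (Fin 2) (Fin 2) ℤ) (hdet : A.det = 1)
    (htr : A.trace ^ 2 < 4) :
    ∃ P : GL (Fin 2) ℤ, (↑P⁻¹ : Matrix (Fin 2) (Fin 2) ℤ) * A * (↑P : Matrix (Fin 2) (Fin 2) ℤ) =
      !![0, 1; -1, A.trace] := by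
  have hD := discrim_eq_trace_sq_sub A
  rw [hdet] at hD
  obtain ⟨x, y, hunit⟩ := exists_isUnit_of_discrim _ _ _ (by rw [hD]; linarith)
    (by rw [hD]; nlinarith [sq_nonneg A.trace])
  have hP : IsUnit (cyclicMatrix A ![x, y]) := by
    rw [isUnit_iff_isUnit_det, det_cyclicMatrix]
    simpa using hunit.neg
  exact ⟨hP.unit, Units.inv_mul_mul_eq_of_mul_eq _ (mul_cyclicMatrix hdet _)⟩

/-- A matrix `A ∈ SL(2, ℤ)` with trace in `{-1, 0, 1}` is conjugate, by a
matrix `P ∈ GL(2, ℤ)`, to `[[0,1],[-1,-1]]`, `[[0,1],[-1,0]]`, or `[[0,1],[-1,1]]`, according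
as the trace is `-1`, `0`, or `1`. -/
theorem stmt2 (A : Matrix (Fin 2) (Fin 2) ℤ) (hdet : A.det = 1)
    (htr : A.trace ∈ ({-1, 0, 1} : Set ℤ)) :
    ∃ P : GL (Fin 2) ℤ,
      (A.trace = -1 → (↑P⁻¹ : Matrix (Fin 2) (Fin 2) ℤ) * A * (↑P : Matrix (Fin 2) (Fin 2) ℤ) = !![0, 1; -1, -1]) ∧
      (A.trace = 0 → (↑P⁻¹ : Matrix (Fin 2) (Fin 2) ℤ) * A * (↑P : Matrix (Fin 2) (Fin 2) ℤ) = !![0, 1; -1, 0]) ∧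
      (A.trace = 1 → (↑P⁻¹ : Matrix (Fin 2) (Fin 2) ℤ) * A * (↑P : Matrix (Fin 2) (Fin 2) ℤ) = !![0, 1; -1, 1]) := by
  have hsq : A.trace ^ 2 < 4 := by
    rcases htr with h | h | h <;> rw [h] <;> norm_num
  obtain ⟨P, hP⟩ := exists_conj_eq_of_trace_sq_lt_four A hdet hsq
  exact ⟨P, fun h => by rw [hP, h], fun h => by rw [hP, h], fun h => by rw [hP, h]⟩
end

section
/- For every nonzero integer n: (i) the center of Λ_n is exactly the subgroup {((x, 0), 0) : x ∈ ℤ}, which is infinite cyclic; (ii) the quotient of Λ_n by its center is isomorphic to ℤ²; and (iii) this central extension does not split, i.e., there is no group homomorphism s from Λ_n / Z(Λ_n) to Λ_n with π ∘ s = id, where π : Λ_n → Λ_n / Z(Λ_n) is the quotient map. -/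
/-!
The map `((x, y), k) ↦ (y, k)` is a homomorphism `Λ_n → ℤ²` with kernel `{((x, 0), 0)}`, and for
`n ≠ 0` this kernel is exactly the centre: an element `((x, y), k)` commutes with `((0, 1), 0)` and
`((0, 0), 1)` only if `n k = 0` and `n y = 0`. For a splitting `s` of `Λ_n → Λ_n ⧸ Z(Λ_n)` and a
central `q` of the quotient, `s q` commutes with the image of `s` and with `Z(Λ_n)`, which together
generate `Λ_n`; so `s q` is central and `q = 1`. Hence the quotient would be centreless, whereas it
is isomorphic to the nontrivial abelian group `ℤ²`.
-/

/-- The automorphism `A_n = [[1,n],[0,1]]` of `ℤ²`, i.e. `A_n(x, y) = (x + n y, y)`. -/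
def AnAut (n : ℤ) : (ℤ × ℤ) ≃+ (ℤ × ℤ) where
  toFun p := (p.1 + n * p.2, p.2)
  invFun p := (p.1 - n * p.2, p.2)
  left_inv p := by simp
  right_inv p := by simp
  map_add' p q := by ext <;> simp <;> ring

/-- The action `φ : ℤ → Aut(ℤ²)`, `φ(k) = A_nᵏ` (written multiplicatively). -/
def phiN (n : ℤ) : Multiplicative ℤ →* MulAut (Multiplicative (ℤ × ℤ)) :=
  zpowersHom _ (AddEquiv.toMultiplicative (AnAut n))

/-- The group `Λ_n = ℤ² ⋊_φ ℤ`, with `((x,y),k)·((x',y'),k') = ((x,y) + A_nᵏ(x',y'), k+k')`. -/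
abbrev Lambda (n : ℤ) : Type :=
  Multiplicative (ℤ × ℤ) ⋊[phiN n] Multiplicative ℤ

theorem Subgroup.center_ne_bot_of_mulEquiv {G H : Type*} [Group G] [CommGroup H] [Nontrivial H]
    (e : G ≃* H) : Subgroup.center G ≠ ⊥ := by
  obtain ⟨h, hh⟩ := exists_ne (1 : H)
  have hcenter : e.symm h ∈ Subgroup.center G :=
    Subgroup.mem_center_iff.2 fun g =>
      e.injective (by simp only [map_mul, e.apply_symm_apply, mul_comm])
  intro hbot
  rw [hbot, Subgroup.mem_bot, MulEquiv.symm_apply_eq, map_one] at hcenter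
  exact hh hcenter

theorem Subgroup.center_quotient_center_eq_bot_of_splitting {G : Type*} [Group G]
    (s : G ⧸ Subgroup.center G →* G)
    (hs : (QuotientGroup.mk' (Subgroup.center G)).comp s = MonoidHom.id _) :
    Subgroup.center (G ⧸ Subgroup.center G) = ⊥ := by
  have hsec (q : G ⧸ Subgroup.center G) : (s q : G ⧸ Subgroup.center G) = q :=
    DFunLike.congr_fun hs q
  refine (Subgroup.eq_bot_iff_forall _).2 fun q hq => ?_
  suffices s q ∈ Subgroup.center G by
    rw [← hsec q]
    exact (QuotientGroup.eq_one_iff _).2 this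
  refine Subgroup.mem_center_iff.2 fun g => ?_
  set p : G ⧸ Subgroup.center G := (g : G ⧸ Subgroup.center G)
  have hz : g * (s p)⁻¹ ∈ Subgroup.center G := by
    rw [← QuotientGroup.eq_one_iff, QuotientGroup.mk_mul, QuotientGroup.mk_inv, hsec,
      mul_inv_cancel]
  have hsp : s p * s q = s q * s p := by
    rw [← map_mul, ← map_mul, Subgroup.mem_center_iff.1 hq]
  calc g * s q = g * (s p)⁻¹ * (s p * s q) := by group
    _ = s q * (g * (s p)⁻¹) * s p := by rw [hsp, Subgroup.mem_center_iff.1 hz]; group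
    _ = s q * g := by group

theorem phiN_ofAdd_apply (n k : ℤ) (a : ℤ × ℤ) :
    phiN n (.ofAdd k) (.ofAdd a) = .ofAdd (a.1 + n * k * a.2, a.2) := by
  have h_one (b : ℤ × ℤ) : phiN n (.ofAdd 1) (.ofAdd b) = .ofAdd (b.1 + n * b.2, b.2) := rfl
  have h_neg_one (b : ℤ × ℤ) : phiN n (.ofAdd (-1)) (.ofAdd b) = .ofAdd (b.1 - n * b.2, b.2) := rfl
  induction k using Int.induction_on generalizing a with
  | zero => simp
  | succ k ih =>
    rw [ofAdd_add, map_mul, MulAut.mul_apply, h_one, ih]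
    congr 1; ext <;> simp only; ring
  | pred k ih =>
    rw [sub_eq_add_neg, ofAdd_add, map_mul, MulAut.mul_apply, h_neg_one, ih]
    congr 1; ext <;> simp only; ring

namespace Lambda

variable {n : ℤ}

def mk (x y k : ℤ) : Lambda n := ⟨.ofAdd (x, y), .ofAdd k⟩

theorem exists_eq_mk (g : Lambda n) : ∃ x y k, g = mk x y k :=
  ⟨g.left.toAdd.1, g.left.toAdd.2, g.right.toAdd, rfl⟩

theorem mk_inj {x y k x' y' k' : ℤ} :
    (mk x y k : Lambda n) = mk x' y' k' ↔ x = x' ∧ y = y' ∧ k = k' := by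
  simp [mk, SemidirectProduct.ext_iff, and_assoc]

theorem mk_mul_mk (x y k x' y' k' : ℤ) :
    (mk x y k : Lambda n) * mk x' y' k' = mk (x + x' + n * k * y') (y + y') (k + k') := by
  refine SemidirectProduct.ext ?_ rfl
  change .ofAdd (x, y) * phiN n (.ofAdd k) (.ofAdd (x', y')) = _
  rw [phiN_ofAdd_apply, ← ofAdd_add]
  congr 1; ext <;> simp only [Prod.fst_add, Prod.snd_add]; ring

def centerHom : Multiplicative ℤ →* Lambda n :=
  SemidirectProduct.inl.comp (AddMonoidHom.toMultiplicative (AddMonoidHom.inl ℤ ℤ))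

theorem centerHom_ofAdd (x : ℤ) : (centerHom (.ofAdd x) : Lambda n) = mk x 0 0 := rfl

theorem centerHom_injective : Function.Injective (centerHom : Multiplicative ℤ →* Lambda n) :=
  fun _ _ h => (mk_inj.1 h).1

def proj : Lambda n →* Multiplicative (ℤ × ℤ) :=
  MonoidHom.mk' (fun g => .ofAdd (g.left.toAdd.2, g.right.toAdd)) fun g g' => by
    obtain ⟨x, y, k, rfl⟩ := exists_eq_mk g
    obtain ⟨x', y', k', rfl⟩ := exists_eq_mk g'
    rw [mk_mul_mk]
    rfl

theorem proj_mk (x y k : ℤ) : proj (mk x y k : Lambda n) = .ofAdd (y, k) := rfl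

theorem proj_surjective : Function.Surjective (proj : Lambda n →* Multiplicative (ℤ × ℤ)) :=
  fun p => ⟨mk 0 p.toAdd.1 p.toAdd.2, rfl⟩

theorem mk_mem_ker_proj_iff {x y k : ℤ} : (mk x y k : Lambda n) ∈ proj.ker ↔ y = 0 ∧ k = 0 := by
  rw [MonoidHom.mem_ker, proj_mk, ofAdd_eq_one, Prod.mk_eq_zero]

theorem ker_proj : (proj : Lambda n →* Multiplicative (ℤ × ℤ)).ker = centerHom.range := by
  ext g
  obtain ⟨x, y, k, rfl⟩ := exists_eq_mk g
  rw [mk_mem_ker_proj_iff, MonoidHom.mem_range]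
  constructor
  · rintro ⟨rfl, rfl⟩
    exact ⟨.ofAdd x, rfl⟩
  · rintro ⟨x', h⟩
    rw [← ofAdd_toAdd x', centerHom_ofAdd, mk_inj] at h
    exact ⟨h.2.1.symm, h.2.2.symm⟩

theorem center_eq_ker_proj (hn : n ≠ 0) : Subgroup.center (Lambda n) = proj.ker := by
  ext g
  obtain ⟨x, y, k, rfl⟩ := exists_eq_mk g
  rw [mk_mem_ker_proj_iff, Subgroup.mem_center_iff]
  constructor
  · intro h
    have hk := mk_inj.1 ((mk_mul_mk ..).symm.trans ((h (mk 0 1 0)).trans (mk_mul_mk ..)))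
    have hy := mk_inj.1 ((mk_mul_mk ..).symm.trans ((h (mk 0 0 1)).trans (mk_mul_mk ..)))
    exact ⟨by simpa [hn] using hy.1, by simpa [hn] using hk.1⟩
  · rintro ⟨rfl, rfl⟩ g
    obtain ⟨x', y', k', rfl⟩ := exists_eq_mk g
    rw [mk_mul_mk, mk_mul_mk, mk_inj]
    exact ⟨by ring, by ring, by ring⟩

theorem center_eq_range_centerHom (hn : n ≠ 0) :
    Subgroup.center (Lambda n) = centerHom.range :=
  (center_eq_ker_proj hn).trans ker_proj

noncomputable def centerMulEquiv (hn : n ≠ 0) : Subgroup.center (Lambda n) ≃* Multiplicative ℤ :=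
  (MulEquiv.subgroupCongr (center_eq_range_centerHom hn)).trans
    (MonoidHom.ofInjective centerHom_injective).symm

noncomputable def quotientCenterMulEquiv (hn : n ≠ 0) :
    (Lambda n ⧸ Subgroup.center (Lambda n)) ≃* Multiplicative (ℤ × ℤ) :=
  (QuotientGroup.quotientMulEquivOfEq (center_eq_ker_proj hn)).trans
    (QuotientGroup.quotientKerEquivOfSurjective proj proj_surjective)

end Lambda

/-- For every nonzero integer `n`:
(i) the center of `Λ_n` is exactly `{((x,0),0) : x ∈ ℤ}` and is infinite cyclic (isomorphic
to `ℤ`); (ii) `Λ_n` modulo its center is isomorphic to `ℤ²`; (iii) the central extension does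
not split: there is no homomorphism `s : Λ_n/Z(Λ_n) →* Λ_n` with `π ∘ s = id`. -/
theorem stmt7 (n : ℤ) (hn : n ≠ 0) :
    ((Subgroup.center (Lambda n) : Set (Lambda n)) =
        Set.range fun x : ℤ =>
          (SemidirectProduct.inl (Multiplicative.ofAdd (x, 0)) : Lambda n)) ∧
    Nonempty (Subgroup.center (Lambda n) ≃* Multiplicative ℤ) ∧
    Nonempty ((Lambda n ⧸ Subgroup.center (Lambda n)) ≃* Multiplicative (ℤ × ℤ)) ∧
    ¬ ∃ s : (Lambda n ⧸ Subgroup.center (Lambda n)) →* Lambda n,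
        (QuotientGroup.mk' (Subgroup.center (Lambda n))).comp s =
          MonoidHom.id (Lambda n ⧸ Subgroup.center (Lambda n)) := by
  refine ⟨?_, ⟨Lambda.centerMulEquiv hn⟩, ⟨Lambda.quotientCenterMulEquiv hn⟩, ?_⟩
  · rw [Lambda.center_eq_range_centerHom hn, MonoidHom.coe_range]
    rfl
  · rintro ⟨s, hs⟩
    exact Subgroup.center_ne_bot_of_mulEquiv (Lambda.quotientCenterMulEquiv hn)
      (Subgroup.center_quotient_center_eq_bot_of_splitting s hs)
end

section
/- Let Γ be a group containing a normal subgroup N with N isomorphic to ℤ and Γ/N isomorphic to ℤ³. Then Γ contains a normal subgroup M with M isomorphic to ℤ × ℤ and Γ/M isomorphic to ℤ × ℤ. -/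
/-!
The conjugation action of `Γ` on `N ≅ ℤ` takes values in `Aut ℤ = {±1}`, so for lifts `g, h`
of the first two basis vectors of `ℤ³` some `t = gⁱ hʲ` with `i, j` coprime centralizes `N`.
Since `(i, j, 0)` is primitive, `ℤ³ / ⟨(i, j, 0)⟩ ≅ ℤ²`; the kernel `M` of the induced map
`Γ → ℤ²` is `N ⊔ ⟨t⟩`, an internal direct product `N × ⟨t⟩ ≅ ℤ²`.
-/

open Subgroup Multiplicative

theorem Int.exists_isCoprime_zpow_mul_zpow_eq_one (a b : ℤˣ) :
    ∃ i j : ℤ, IsCoprime i j ∧ a ^ i * b ^ j = 1 := by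
  rcases Int.units_eq_one_or a with rfl | rfl
  · exact ⟨1, 0, isCoprime_one_left, by simp⟩
  rcases Int.units_eq_one_or b with rfl | rfl
  · exact ⟨0, 1, isCoprime_one_right, by simp⟩
  · exact ⟨1, 1, isCoprime_one_left, by simp⟩

theorem MulAut.exists_isCoprime_zpow_mul_zpow_eq_one {C : Type*} [Group C] [IsCyclic C]
    [Infinite C] (σ τ : MulAut C) : ∃ i j : ℤ, IsCoprime i j ∧ σ ^ i * τ ^ j = 1 := by
  have e := IsCyclic.mulAutMulEquiv C
  -- `Nat.card C = 0`, and `ZMod 0` is `ℤ`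
  rw [Nat.card_eq_zero_of_infinite] at e
  obtain ⟨i, j, hij, h⟩ := Int.exists_isCoprime_zpow_mul_zpow_eq_one (e σ) (e τ)
  exact ⟨i, j, hij, e.injective (by rw [map_mul, map_zpow, map_zpow, map_one]; exact h)⟩

theorem Subgroup.exists_isCoprime_zpow_mul_zpow_mem_centralizer {G : Type*} [Group G]
    (N : Subgroup G) [N.Normal] [IsCyclic N] [Infinite N] (g h : G) :
    ∃ i j : ℤ, IsCoprime i j ∧ g ^ i * h ^ j ∈ centralizer N := by
  obtain ⟨i, j, hij, hconj⟩ := MulAut.exists_isCoprime_zpow_mul_zpow_eq_one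
    (MulAut.conjNormal (H := N) g) (MulAut.conjNormal h)
  refine ⟨i, j, hij, mem_centralizer_iff.mpr fun n hn => ?_⟩
  have := congrArg (fun σ : MulAut N => ((σ ⟨n, hn⟩ : N) : G)) hconj
  simp only [← map_zpow, ← map_mul, MulAut.conjNormal_apply, MulAut.one_apply] at this
  exact (mul_inv_eq_iff_eq_mul.mp this).symm

theorem exists_surjective_ker_eq_zpowers {a b : ℤ} (hab : IsCoprime a b) :
    ∃ p : Multiplicative (ℤ × ℤ × ℤ) →* Multiplicative (ℤ × ℤ),
      Function.Surjective p ∧ p.ker = zpowers (ofAdd (a, b, 0)) := by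
  obtain ⟨u, w, huw⟩ := hab
  let p : ℤ × ℤ × ℤ →+ ℤ × ℤ :=
    { toFun := fun x => (b * x.1 - a * x.2.1, x.2.2)
      map_zero' := by simp
      map_add' := fun x y => Prod.ext (by dsimp; ring) rfl }
  refine ⟨AddMonoidHom.toMultiplicative p, fun y => ?_, ?_⟩
  · obtain ⟨⟨y₁, y₂⟩, rfl⟩ := ofAdd.surjective y
    refine ⟨ofAdd (w * y₁, -u * y₁, y₂), ?_⟩
    change ofAdd (b * (w * y₁) - a * (-u * y₁), y₂) = ofAdd (y₁, y₂)
    congr 2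
    linear_combination y₁ * huw
  · ext x
    obtain ⟨⟨x₁, x₂, x₃⟩, rfl⟩ := ofAdd.surjective x
    simp only [MonoidHom.mem_ker, mem_zpowers_iff, ← ofAdd_zsmul]
    simp only [AddMonoidHom.toMultiplicative_apply_apply, toAdd_ofAdd, AddMonoidHom.coe_mk,
      ZeroHom.coe_mk, ofAdd_eq_one, Prod.mk_eq_zero, Prod.smul_mk, Int.zsmul_eq_mul, mul_zero,
      EmbeddingLike.apply_eq_iff_eq, Prod.mk.injEq, p]
    constructor
    · rintro ⟨h, rfl⟩
      exact ⟨u * x₁ + w * x₂, by linear_combination x₁ * huw - w * h,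
        by linear_combination x₂ * huw + u * h, rfl⟩
    · rintro ⟨k, rfl, rfl, rfl⟩
      exact ⟨by ring, rfl⟩

noncomputable def Subgroup.supZPowersEquivProd {G : Type*} [Group G] (N : Subgroup G) {t : G}
    (ht : t ∈ centralizer N) (hdisj : ∀ k : ℤ, t ^ k ∈ N → k = 0) :
    ↥(N ⊔ zpowers t) ≃* N × Multiplicative ℤ :=
  let f : N × Multiplicative ℤ →* G := N.subtype.noncommCoprod (zpowersHom G t) fun n k =>
    Commute.zpow_right (show Commute (n : G) t from mem_centralizer_iff.mp ht n n.2) _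
  have hf (n : N) (k : Multiplicative ℤ) : f (n, k) = n * t ^ toAdd k := rfl
  have hinj : Function.Injective f := by
    rw [injective_iff_map_eq_one]
    rintro ⟨n, k⟩ h
    rw [hf] at h
    have hk : toAdd k = 0 := hdisj _ <| by
      rw [eq_inv_of_mul_eq_one_right h]
      exact inv_mem n.2
    rw [hk, zpow_zero, mul_one, OneMemClass.coe_eq_one] at h
    rw [h, show k = 1 from hk, Prod.mk_one_one]
  have hrange : f.range = N ⊔ zpowers t := by
    apply le_antisymm
    · rintro _ ⟨⟨n, k⟩, rfl⟩
      exact mul_mem (mem_sup_left n.2) (mem_sup_right (zpow_mem_zpowers t _))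
    · exact sup_le (fun n hn => ⟨(⟨n, hn⟩, 1), by simp [hf]⟩)
        (zpowers_le.mpr ⟨(1, ofAdd 1), by simp [hf]⟩)
  ((MonoidHom.ofInjective hinj).trans (MulEquiv.subgroupCongr hrange)).symm

/-- If a group `Γ` has a normal subgroup `N ≅ ℤ` with `Γ/N ≅ ℤ³`, then `Γ`
has a normal subgroup `M ≅ ℤ × ℤ` with `Γ/M ≅ ℤ × ℤ` (the quotient `Γ/M ≅ ℤ × ℤ` being
expressed by a surjective homomorphism onto `ℤ × ℤ` with kernel `M`). -/
theorem stmt8 (Γ : Type*) [Group Γ] (N : Subgroup Γ) [N.Normal]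
    (hN : Nonempty (N ≃* Multiplicative ℤ))
    (hQ : Nonempty ((Γ ⧸ N) ≃* Multiplicative (ℤ × ℤ × ℤ))) :
    ∃ M : Subgroup Γ, M.Normal ∧ Nonempty (M ≃* Multiplicative (ℤ × ℤ)) ∧
      ∃ f : Γ →* Multiplicative (ℤ × ℤ), Function.Surjective f ∧ f.ker = M := by
  obtain ⟨φ⟩ := hN
  obtain ⟨ψ⟩ := hQ
  have : IsCyclic N := φ.isCyclic.mpr inferInstance
  have : Infinite N := φ.symm.infinite_iff.mp inferInstance
  let q : Γ →* Multiplicative (ℤ × ℤ × ℤ) := (ψ : Γ ⧸ N →* _).comp (QuotientGroup.mk' N)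
  have hq : Function.Surjective q := ψ.surjective.comp (QuotientGroup.mk'_surjective N)
  have hker : q.ker = N := (MonoidHom.ker_mulEquiv_comp _ ψ).trans (QuotientGroup.ker_mk' N)
  obtain ⟨g, hg⟩ := hq (ofAdd (1, 0, 0))
  obtain ⟨h, hh⟩ := hq (ofAdd (0, 1, 0))
  obtain ⟨i, j, hij, hcent⟩ := N.exists_isCoprime_zpow_mul_zpow_mem_centralizer g h
  have hqt : q (g ^ i * h ^ j) = ofAdd (i, j, 0) := by
    simp [hg, hh, ← ofAdd_zsmul, ← ofAdd_add]
  obtain ⟨p, hp, hpker⟩ := exists_surjective_ker_eq_zpowers hij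
  have hM : (p.comp q).ker = N ⊔ zpowers (g ^ i * h ^ j) := by
    rw [← MonoidHom.comap_ker, hpker, ← hqt, ← MonoidHom.map_zpowers, comap_map_eq, hker,
      sup_comm]
  have hdisj (k : ℤ) (hk : (g ^ i * h ^ j) ^ k ∈ N) : k = 0 := by
    rw [← hker, MonoidHom.mem_ker, map_zpow, hqt, IsMulTorsionFree.zpow_eq_one_iff] at hk
    refine hk.resolve_left fun hv => ?_
    simp only [ofAdd_eq_one, Prod.mk_eq_zero] at hv
    exact hij.ne_zero_or_ne_zero.elim (· hv.1) (· hv.2.1)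
  refine ⟨_, inferInstance, ⟨?_⟩, p.comp q, hp.comp hq, rfl⟩
  rw [hM]
  exact (N.supZPowersEquivProd hcent hdisj).trans
    ((φ.prodCongr (MulEquiv.refl _)).trans (MulEquiv.prodMultiplicative ℤ ℤ).symm)
end

section
/- For every integer g ≥ 2, the surface group of genus g — the group presented by generators a₁, b₁, …, a_g, b_g and the single relation [a₁,b₁][a₂,b₂]⋯[a_g,b_g] = 1 — is not a solvable group. -/
/-!
Killing every `bᵢ` kills the surface relator, so the surface group of genus `g` surjects onto the
free group of rank `g` (geometrically: the handlebody bounded by the surface retracts onto a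
wedge of `g` circles). A free group of rank at least two surjects onto `S₅`, which is generated
by a `5`-cycle and a transposition, and `S₅` is not solvable.
-/

open scoped commutatorElement in
/-- The surface relator `[a₁,b₁][a₂,b₂]⋯[a_g,b_g]` in the free group on the `2g` generators
`a i = .inl i`, `b i = .inr i`. -/
def surfaceRelator (g : ℕ) : FreeGroup (Fin g ⊕ Fin g) :=
  (List.ofFn fun i : Fin g =>
    ⁅(FreeGroup.of (Sum.inl i) : FreeGroup (Fin g ⊕ Fin g)), FreeGroup.of (Sum.inr i)⁆).prod

/-- The surface group of genus `g`: generators `a₁, b₁, …, a_g, b_g` and the single relation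
`[a₁,b₁][a₂,b₂]⋯[a_g,b_g] = 1`. -/
abbrev SurfaceGroup (g : ℕ) : Type :=
  PresentedGroup ({surfaceRelator g} : Set (FreeGroup (Fin g ⊕ Fin g)))

open scoped commutatorElement in
theorem FreeGroup.lift_surfaceRelator_eq_one {g : ℕ} {G : Type*} [Group G]
    {f : Fin g ⊕ Fin g → G} (hf : ∀ i, f (.inr i) = 1) :
    FreeGroup.lift f (surfaceRelator g) = 1 := by
  rw [surfaceRelator, map_list_prod, List.map_ofFn]
  refine List.prod_eq_one fun x hx => ?_
  obtain ⟨i, rfl⟩ := List.mem_ofFn.mp hx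
  simp [map_commutatorElement, hf]

namespace SurfaceGroup

def toFreeGroup (g : ℕ) : SurfaceGroup g →* FreeGroup (Fin g) :=
  PresentedGroup.toGroup (f := Sum.elim FreeGroup.of 1) fun r hr => by
    rw [Set.mem_singleton_iff.mp hr]
    exact FreeGroup.lift_surfaceRelator_eq_one fun _ => rfl

theorem toFreeGroup_surjective (g : ℕ) : Function.Surjective (toFreeGroup g) := by
  rw [← MonoidHom.range_eq_top, eq_top_iff, ← FreeGroup.closure_range_of, Subgroup.closure_le]
  rintro _ ⟨i, rfl⟩
  exact ⟨PresentedGroup.of (.inl i), PresentedGroup.toGroup.of _⟩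

end SurfaceGroup

theorem FreeGroup.not_isSolvable {α : Type*} [Nontrivial α] :
    ¬ Group.IsSolvable (FreeGroup α) := by
  classical
  obtain ⟨a, b, hba⟩ := exists_pair_ne α
  let σ : Equiv.Perm (Fin 5) := finRotate 5
  let τ : Equiv.Perm (Fin 5) := Equiv.swap 0 (σ 0)
  let φ := FreeGroup.lift fun x : α => if x = a then σ else τ
  have hφ : Function.Surjective φ := by
    rw [← MonoidHom.range_eq_top, FreeGroup.range_lift_eq_closure, eq_top_iff,
      ← Equiv.Perm.closure_cycle_adjacent_swap (isCycle_finRotate (n := 3))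
        (support_finRotate (n := 3)) 0]
    refine Subgroup.closure_mono ?_
    rintro _ (rfl | rfl)
    exacts [⟨a, if_pos rfl⟩, ⟨b, if_neg hba.symm⟩]
  exact fun _ => Equiv.Perm.not_isSolvable_fin_5 (Group.isSolvable_of_surjective hφ)

/-- For every `g ≥ 2`, the surface group of genus `g` is not solvable. -/
theorem stmt9 (g : ℕ) (hg : 2 ≤ g) : ¬ IsSolvable (SurfaceGroup g) := by
  intro hsolv
  have : Group.IsSolvable (SurfaceGroup g) := hsolv
  have : Nontrivial (Fin g) := Fin.nontrivial_iff_two_le.mpr hg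
  exact FreeGroup.not_isSolvable
    (Group.isSolvable_of_surjective (SurfaceGroup.toFreeGroup_surjective g))
end

section
/- Let a, b ∈ ℝ and let 𝔤 be a real Lie algebra with a basis X₁, X₂, X₃, X₄ whose bracket relations on basis elements are ⁅X₄, X₁⁆ = aX₁ − bX₂, ⁅X₄, X₂⁆ = bX₁ + aX₂, ⁅X₄, X₃⁆ = −2aX₃, and all other brackets of basis elements vanish. Let J be the linear endomorphism of 𝔤 with JX₁ = X₂, JX₂ = −X₁, JX₃ = X₄, JX₄ = −X₃. Then J ∘ J = −id and the Nijenhuis tensor N_J vanishes identically: N_J(x, y) = 0 for all x, y ∈ 𝔤. -/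
/-! The Nijenhuis tensor of an almost complex structure `J` is alternating and satisfies
`N(Jx, y) = -J N(x, y)`, so on a Lie algebra with basis `u, Ju, v, Jv` it vanishes as soon as
`N(u, v) = 0`. For the Inoue algebra with `u = X₁`, `v = X₃` this single value is
`⁅X₂, X₄⁆ + J(aX₁ - bX₂) = -(bX₁ + aX₂) + (aX₂ + bX₁) = 0`. -/

section Nijenhuis

variable {R L : Type*} [CommRing R] [LieRing L] [LieAlgebra R L]

def nijenhuis (J : L →ₗ[R] L) : L →ₗ[R] L →ₗ[R] L :=
  LinearMap.mk₂ R (fun x y => ⁅J x, J y⁆ - J ⁅J x, y⁆ - J ⁅x, J y⁆ - ⁅x, y⁆)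
    (fun x x' y => by simp only [map_add, add_lie]; abel)
    (fun c x y => by simp only [map_smul, smul_lie, smul_sub])
    (fun x y y' => by simp only [map_add, lie_add]; abel)
    (fun c x y => by simp only [map_smul, lie_smul, smul_sub])

variable (J : L →ₗ[R] L)

theorem nijenhuis_apply (x y : L) :
    nijenhuis J x y = ⁅J x, J y⁆ - J ⁅J x, y⁆ - J ⁅x, J y⁆ - ⁅x, y⁆ :=
  rfl

@[simp]
theorem nijenhuis_self (x : L) : nijenhuis J x x = 0 := by
  rw [nijenhuis_apply, lie_self, lie_self, ← lie_skew, map_neg]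
  abel

theorem nijenhuis_swap (x y : L) : nijenhuis J y x = -nijenhuis J x y := by
  simp only [nijenhuis_apply, ← lie_skew x y, ← lie_skew (J x) (J y), ← lie_skew (J x) y,
    ← lie_skew x (J y), map_neg]
  abel

variable {J} (hJ : ∀ x, J (J x) = -x)
include hJ

theorem nijenhuis_map_left (x y : L) : nijenhuis J (J x) y = -J (nijenhuis J x y) := by
  simp only [nijenhuis_apply, hJ, neg_lie, map_neg, map_sub]
  abel

theorem nijenhuis_map_right (x y : L) : nijenhuis J x (J y) = -J (nijenhuis J x y) := by
  rw [nijenhuis_swap, nijenhuis_map_left hJ, nijenhuis_swap J y x, map_neg, neg_neg]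

theorem nijenhuis_eq_zero_of_basis (X : Module.Basis (Fin 4) R L)
    (h1 : X 1 = J (X 0)) (h3 : X 3 = J (X 2)) (h : nijenhuis J (X 0) (X 2) = 0) :
    nijenhuis J = 0 := by
  have h' : nijenhuis J (X 2) (X 0) = 0 := by rw [nijenhuis_swap, h, neg_zero]
  refine X.ext fun i => X.ext fun j => ?_
  fin_cases i <;> fin_cases j <;>
    simp [h1, h3, h, h', nijenhuis_map_left hJ, nijenhuis_map_right hJ]

end Nijenhuis

theorem stmt11_general (a b : ℝ) (L : Type*) [LieRing L] [LieAlgebra ℝ L] (X : Module.Basis (Fin 4) ℝ L)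
    (h13 : ⁅X 0, X 2⁆ = 0) (h23 : ⁅X 1, X 2⁆ = 0)
    (h41 : ⁅X 3, X 0⁆ = a • X 0 - b • X 1)
    (h42 : ⁅X 3, X 1⁆ = b • X 0 + a • X 1)
    (J : L →ₗ[ℝ] L)
    (hJ1 : J (X 0) = X 1) (hJ2 : J (X 1) = -X 0)
    (hJ3 : J (X 2) = X 3) (hJ4 : J (X 3) = -X 2) :
    (∀ x : L, J (J x) = -x) ∧
      ∀ x y : L, ⁅J x, J y⁆ - J ⁅J x, y⁆ - J ⁅x, J y⁆ - ⁅x, y⁆ = 0 := by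
  have hJJ : J ∘ₗ J = -LinearMap.id :=
    X.ext fun i => by fin_cases i <;> simp [hJ1, hJ2, hJ3, hJ4]
  have hJ (x : L) : J (J x) = -x := LinearMap.congr_fun hJJ x
  have hN13 : nijenhuis J (X 0) (X 2) = 0 := by
    rw [nijenhuis_apply, hJ1, hJ3, h13, h23, ← lie_skew (X 1) (X 3), h42,
      ← lie_skew (X 0) (X 3), h41]
    simp only [map_zero, map_neg, map_sub, map_smul, hJ1, hJ2]
    module
  have hN := nijenhuis_eq_zero_of_basis hJ X hJ1.symm hJ3.symm hN13
  exact ⟨hJ, fun x y => LinearMap.congr_fun₂ hN x y⟩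

/-- On the real Lie algebra with basis `X₁, X₂, X₃, X₄` and brackets
`⁅X₄,X₁⁆ = aX₁ - bX₂`, `⁅X₄,X₂⁆ = bX₁ + aX₂`, `⁅X₄,X₃⁆ = -2aX₃` (all other brackets of
basis elements vanishing) — the Lie algebra of Inoue surfaces of type `S⁰` — the
endomorphism `J` with `JX₁ = X₂`, `JX₂ = -X₁`, `JX₃ = X₄`, `JX₄ = -X₃` satisfies
`J² = -id` and has vanishing Nijenhuis tensor. -/
theorem stmt11 (a b : ℝ) (L : Type*) [LieRing L] [LieAlgebra ℝ L] (X : Module.Basis (Fin 4) ℝ L)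
    (h12 : ⁅X 0, X 1⁆ = 0) (h13 : ⁅X 0, X 2⁆ = 0) (h23 : ⁅X 1, X 2⁆ = 0)
    (h41 : ⁅X 3, X 0⁆ = a • X 0 - b • X 1)
    (h42 : ⁅X 3, X 1⁆ = b • X 0 + a • X 1)
    (h43 : ⁅X 3, X 2⁆ = (-2 * a) • X 2)
    (J : L →ₗ[ℝ] L)
    (hJ1 : J (X 0) = X 1) (hJ2 : J (X 1) = -X 0)
    (hJ3 : J (X 2) = X 3) (hJ4 : J (X 3) = -X 2) :
    (∀ x : L, J (J x) = -x) ∧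
      ∀ x y : L, ⁅J x, J y⁆ - J ⁅J x, y⁆ - J ⁅x, J y⁆ - ⁅x, y⁆ = 0 :=
  stmt11_general a b L X h13 h23 h41 h42 J hJ1 hJ2 hJ3 hJ4
end

section
/- Let a, b ∈ ℝ with a² + b² = 1. Then the map ψ : ℝ³ → ℝ³ defined by ψ(x, y, z) = (ax − by, bx + ay, z + h(x, y)), where h(x, y) = (b/2)(a x² − a y² − 2 b x y), is a group automorphism of the Heisenberg group H. -/
/-- The Heisenberg group: `ℝ³` with `(x,y,s)·(x',y',s') = (x+x', y+y', s+s'+xy')`. -/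
@[ext]
structure Heisenberg where
  x : ℝ
  y : ℝ
  s : ℝ

namespace Heisenberg

instance : Mul Heisenberg := ⟨fun a b => ⟨a.x + b.x, a.y + b.y, a.s + b.s + a.x * b.y⟩⟩
instance : One Heisenberg := ⟨⟨0, 0, 0⟩⟩
instance : Inv Heisenberg := ⟨fun a => ⟨-a.x, -a.y, -a.s + a.x * a.y⟩⟩

@[simp] lemma mul_x (a b : Heisenberg) : (a * b).x = a.x + b.x := rfl
@[simp] lemma mul_y (a b : Heisenberg) : (a * b).y = a.y + b.y := rfl
@[simp] lemma mul_s (a b : Heisenberg) : (a * b).s = a.s + b.s + a.x * b.y := rfl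
@[simp] lemma one_x : (1 : Heisenberg).x = 0 := rfl
@[simp] lemma one_y : (1 : Heisenberg).y = 0 := rfl
@[simp] lemma one_s : (1 : Heisenberg).s = 0 := rfl
@[simp] lemma inv_x (a : Heisenberg) : a⁻¹.x = -a.x := rfl
@[simp] lemma inv_y (a : Heisenberg) : a⁻¹.y = -a.y := rfl
@[simp] lemma inv_s (a : Heisenberg) : a⁻¹.s = -a.s + a.x * a.y := rfl

instance : Group Heisenberg where
  mul_assoc a b c := by ext <;> simp <;> ring
  one_mul a := by ext <;> simp
  mul_one a := by ext <;> simp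
  inv_mul_cancel a := by ext <;> simp <;> ring

end Heisenberg

/-!
The rotation `R` of `ℝ²` preserves the symplectic form `x y' - y x'`, so the two Heisenberg
cocycles `x y'` and `(R p).x (R q).y` differ by a symmetric bilinear form of `(p, q)`. That form
is the polarization of the quadratic form `h`, so adding `h` to the central coordinate repairs
the defect and `ψ` is a homomorphism; its inverse is the same construction for `(a, -b)`.
-/

namespace Heisenberg

noncomputable def rotationCorrection (a b x y : ℝ) : ℝ :=
  b / 2 * (a * x ^ 2 - a * y ^ 2 - 2 * b * x * y)

noncomputable def rotate (a b : ℝ) (p : Heisenberg) : Heisenberg :=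
  ⟨a * p.x - b * p.y, b * p.x + a * p.y, p.s + rotationCorrection a b p.x p.y⟩

variable {a b : ℝ}

theorem rotationCorrection_add (hab : a ^ 2 + b ^ 2 = 1) (x y x' y' : ℝ) :
    rotationCorrection a b (x + x') (y + y') =
      rotationCorrection a b x y + rotationCorrection a b x' y'
        + (a * x - b * y) * (b * x' + a * y') - x * y' := by
  unfold rotationCorrection
  linear_combination (-(x * y')) * hab

theorem rotate_mul (hab : a ^ 2 + b ^ 2 = 1) (p q : Heisenberg) :
    rotate a b (p * q) = rotate a b p * rotate a b q := by
  ext <;> simp only [rotate, mul_x, mul_y, mul_s, rotationCorrection_add hab] <;> ring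

theorem rotate_neg_rotate (hab : a ^ 2 + b ^ 2 = 1) (p : Heisenberg) :
    rotate a (-b) (rotate a b p) = p := by
  ext <;> simp only [rotate, rotationCorrection]
  · linear_combination p.x * hab
  · linear_combination p.y * hab
  · linear_combination (-(b / 2) * (a * (p.x ^ 2 - p.y ^ 2) - 2 * b * p.x * p.y)) * hab

theorem rotate_rotate_neg (hab : a ^ 2 + b ^ 2 = 1) (p : Heisenberg) :
    rotate a b (rotate a (-b) p) = p := by
  simpa only [neg_neg] using rotate_neg_rotate (b := -b) (by rwa [neg_sq]) p

noncomputable def rotateEquiv (hab : a ^ 2 + b ^ 2 = 1) : Heisenberg ≃* Heisenberg where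
  toFun := rotate a b
  invFun := rotate a (-b)
  left_inv := rotate_neg_rotate hab
  right_inv := rotate_rotate_neg hab
  map_mul' := rotate_mul hab

end Heisenberg

/-- For `a, b ∈ ℝ` with `a² + b² = 1`, the map
`ψ(x, y, z) = (ax − by, bx + ay, z + h(x, y))`, with
`h(x, y) = (b/2)(a x² − a y² − 2 b x y)`, is a group automorphism of the Heisenberg
group `H`. -/
theorem stmt15 (a b : ℝ) (hab : a ^ 2 + b ^ 2 = 1) :
    ∃ ψ : Heisenberg ≃* Heisenberg, ∀ p : Heisenberg,
      ψ p = ⟨a * p.x - b * p.y, b * p.x + a * p.y,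
              p.s + b / 2 * (a * p.x ^ 2 - a * p.y ^ 2 - 2 * b * p.x * p.y)⟩ :=
  ⟨Heisenberg.rotateEquiv hab, fun _ => rfl⟩
end

section
/- Let 𝔤 be a real Lie algebra with a basis X₁, X₂, Y₁, Y₂, Z, W whose bracket relations on basis elements are ⁅X₁, Z⁆ = X₁, ⁅X₂, Z⁆ = −X₂, ⁅Y₁, Z⁆ = Y₁, ⁅Y₂, Z⁆ = −Y₂, with all other brackets of basis elements vanishing. Let ω be the alternating bilinear form on 𝔤 determined by ω(X₁, X₂) = 1, ω(Y₁, Y₂) = 1, ω(Z, W) = 1, and ω = 0 on all other pairs of distinct basis elements, and let J be the linear endomorphism of 𝔤 with JX₁ = Y₁, JY₁ = −X₁, JX₂ = Y₂, JY₂ = −X₂, JZ = W, JW = −Z. Then: (i) ω is closed, i.e., ω(⁅x, y⁆, z) + ω(⁅y, z⁆, x) + ω(⁅z, x⁆, y) = 0 for all x, y, z ∈ 𝔤; (ii) ω is nondegenerate, i.e., if ω(x, y) = 0 for all y ∈ 𝔤 then x = 0; (iii) J ∘ J = −id and the Nijenhuis tensor N_J vanishes identically; and (iv) ω(Jx, Jy)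 = ω(x, y) for all x, y ∈ 𝔤. -/
/-!
Each of the four conditions is a multilinear identity in its arguments, so it suffices to check it
on the basis, where it becomes a finite computation with the structure constants: `Z` acts
diagonally on `X₁, X₂, Y₁, Y₂` and everything else commutes. The Gram matrix of `ω` squares to
`-1`, so its determinant is nonzero and `ω` is nondegenerate.
-/

namespace Module.Basis

variable {ι R M N : Type*} [CommRing R] [AddCommGroup M] [Module R M] [AddCommGroup N]
  [Module R N] (b : Basis ι R M)

theorem eq_zero_of_isLinearMap {f : M → N} (hf : IsLinearMap R f) (h : ∀ i, f (b i) = 0)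
    (x : M) : f x = 0 :=
  LinearMap.congr_fun (b.ext (f₁ := hf.mk' f) (f₂ := 0) h) x

theorem eq_zero_of_isLinearMap_of_cyclic {f : M → M → M → N}
    (hf : ∀ y z, IsLinearMap R (f · y z)) (hcyc : ∀ x y z, f x y z = f y z x)
    (h : ∀ i j k, f (b i) (b j) (b k) = 0) (x y z : M) : f x y z = 0 := by
  -- cyclic invariance moves each argument in turn into the linear slot
  have h₁ : ∀ x j k, f x (b j) (b k) = 0 := fun x j k =>
    b.eq_zero_of_isLinearMap (hf _ _) (fun i => h i j k) x
  have h₂ : ∀ x y k, f x y (b k) = 0 := fun x y k => by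
    rw [hcyc]
    exact b.eq_zero_of_isLinearMap (hf _ _) (fun j => by rw [← hcyc]; exact h₁ x j k) y
  rw [hcyc, hcyc]
  exact b.eq_zero_of_isLinearMap (hf _ _) (fun k => by rw [← hcyc, ← hcyc]; exact h₂ x y k) z

end Module.Basis

section LieAlgebra

variable {R L : Type*} [CommRing R] [LieRing L] [LieAlgebra R L]

def LieAlgebra.nijenhuisTensor (J : L →ₗ[R] L) : L →ₗ[R] L →ₗ[R] L :=
  LinearMap.mk₂ R (fun x y => ⁅J x, J y⁆ - J ⁅J x, y⁆ - J ⁅x, J y⁆ - ⁅x, y⁆)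
    (fun _ _ _ => by simp only [map_add, add_lie]; abel)
    (fun _ _ _ => by simp only [map_smul, smul_lie, smul_sub])
    (fun _ _ _ => by simp only [map_add, lie_add]; abel)
    (fun _ _ _ => by simp only [map_smul, lie_smul, smul_sub])

theorem LieAlgebra.nijenhuisTensor_apply (J : L →ₗ[R] L) (x y : L) :
    nijenhuisTensor J x y = ⁅J x, J y⁆ - J ⁅J x, y⁆ - J ⁅x, J y⁆ - ⁅x, y⁆ := rfl

theorem isLinearMap_lie_cyclic (ω : L →ₗ[R] L →ₗ[R] R) (y z : L) :
    IsLinearMap R fun x => ω ⁅x, y⁆ z + ω ⁅y, z⁆ x + ω ⁅z, x⁆ y where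
  map_add _ _ := by simp only [add_lie, lie_add, map_add, LinearMap.add_apply]; ring
  map_smul _ _ := by
    simp only [smul_lie, lie_smul, map_smul, LinearMap.smul_apply, smul_eq_mul]; ring

theorem lie_cyclic_eq_zero_of_basis {ι : Type*} (b : Module.Basis ι R L) (ω : L →ₗ[R] L →ₗ[R] R)
    (h : ∀ i j k, ω ⁅b i, b j⁆ (b k) + ω ⁅b j, b k⁆ (b i) + ω ⁅b k, b i⁆ (b j) = 0)
    (x y z : L) : ω ⁅x, y⁆ z + ω ⁅y, z⁆ x + ω ⁅z, x⁆ y = 0 :=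
  b.eq_zero_of_isLinearMap_of_cyclic (f := fun x y z => ω ⁅x, y⁆ z + ω ⁅y, z⁆ x + ω ⁅z, x⁆ y)
    (isLinearMap_lie_cyclic ω) (fun _ _ _ => by ring) h x y z

end LieAlgebra

namespace PseudoKahlerExample

open Module

def zWeight : Fin 6 → ℝ := ![1, -1, 1, -1, 0, 0]

def omegaMatrix : Matrix (Fin 6) (Fin 6) ℝ :=
  !![0, 1, 0, 0, 0, 0; -1, 0, 0, 0, 0, 0; 0, 0, 0, 1, 0, 0; 0, 0, -1, 0, 0, 0;
    0, 0, 0, 0, 0, 1; 0, 0, 0, 0, -1, 0]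

theorem omegaMatrix_mul_self : omegaMatrix * omegaMatrix = -1 := by
  ext i j
  fin_cases i <;> fin_cases j <;> simp [omegaMatrix, Matrix.mul_apply, Fin.sum_univ_six]

theorem det_omegaMatrix_ne_zero : omegaMatrix.det ≠ 0 := by
  have h : omegaMatrix.det * omegaMatrix.det = 1 := by
    rw [← Matrix.det_mul, omegaMatrix_mul_self, Matrix.det_neg, Matrix.det_one]; norm_num
  exact left_ne_zero_of_mul_eq_one h

variable {L : Type*} [LieRing L] [LieAlgebra ℝ L] (b : Basis (Fin 6) ℝ L)

-- `⁅b i, b 4⁆ = zWeight i • b i`, and any two basis vectors other than `b 4` commute.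
noncomputable def lieTable (i j : Fin 6) : L :=
  (if j = 4 then zWeight i • b i else 0) - if i = 4 then zWeight j • b j else 0

noncomputable def jTable : Fin 6 → L := ![b 2, b 3, -b 0, -b 1, b 5, -b 4]

theorem lie_cyclic_eq_zero (hlie : ∀ i j, ⁅b i, b j⁆ = lieTable b i j)
    {ω : L →ₗ[ℝ] L →ₗ[ℝ] ℝ} (hω : ∀ i j, ω (b i) (b j) = omegaMatrix i j) (x y z : L) :
    ω ⁅x, y⁆ z + ω ⁅y, z⁆ x + ω ⁅z, x⁆ y = 0 :=
  lie_cyclic_eq_zero_of_basis b ω (fun i j k => by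
    simp only [hlie, lieTable, map_sub, LinearMap.sub_apply]
    fin_cases i <;> fin_cases j <;> fin_cases k <;> simp [hω, zWeight, omegaMatrix]) x y z

theorem separatingLeft {ω : L →ₗ[ℝ] L →ₗ[ℝ] ℝ} (hω : ∀ i j, ω (b i) (b j) = omegaMatrix i j) :
    ω.SeparatingLeft := by
  refine LinearMap.separatingLeft_of_det_ne_zero b ?_
  convert det_omegaMatrix_ne_zero
  ext i j
  rw [LinearMap.toMatrix₂_apply, hω]

theorem comp_self_eq_neg_id {J : L →ₗ[ℝ] L} (hJ : ∀ i, J (b i) = jTable b i) :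
    J ∘ₗ J = -LinearMap.id :=
  b.ext fun i => by fin_cases i <;> simp [hJ, jTable]

theorem nijenhuisTensor_eq_zero (hlie : ∀ i j, ⁅b i, b j⁆ = lieTable b i j)
    {J : L →ₗ[ℝ] L} (hJ : ∀ i, J (b i) = jTable b i) :
    LieAlgebra.nijenhuisTensor J = 0 :=
  LinearMap.ext_basis b b fun i j => by
    rw [LieAlgebra.nijenhuisTensor_apply]
    fin_cases i <;> fin_cases j <;> simp [hJ, jTable, hlie, lieTable, zWeight]

theorem compl₁₂_eq_self {ω : L →ₗ[ℝ] L →ₗ[ℝ] ℝ} (hω : ∀ i j, ω (b i) (b j) = omegaMatrix i j)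
    {J : L →ₗ[ℝ] L} (hJ : ∀ i, J (b i) = jTable b i) :
    ω.compl₁₂ J J = ω :=
  LinearMap.ext_basis b b fun i j => by
    rw [LinearMap.compl₁₂_apply]
    fin_cases i <;> fin_cases j <;> simp [hJ, jTable, hω, omegaMatrix]

end PseudoKahlerExample

/-- On the 6-dimensional completely solvable real Lie algebra with basis
`X₁, X₂, Y₁, Y₂, Z, W` (here `b 0 = X₁`, `b 1 = X₂`, `b 2 = Y₁`, `b 3 = Y₂`, `b 4 = Z`,
`b 5 = W`) and brackets `⁅X₁,Z⁆ = X₁`, `⁅X₂,Z⁆ = -X₂`, `⁅Y₁,Z⁆ = Y₁`, `⁅Y₂,Z⁆ = -Y₂`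
(all other brackets of basis elements vanishing), the pair `(ω, J)` with
`ω = α₁∧α₂ + β₁∧β₂ + γ∧η` (i.e. `ω(X₁,X₂) = ω(Y₁,Y₂) = ω(Z,W) = 1` and `ω = 0` on all
other pairs of distinct basis elements) and `JX₁ = Y₁`, `JY₁ = -X₁`, `JX₂ = Y₂`,
`JY₂ = -X₂`, `JZ = W`, `JW = -Z` is a pseudo-Kähler structure: `ω` is closed and
nondegenerate, `J² = -id` with vanishing Nijenhuis tensor, and `ω` is `J`-invariant. -/
theorem stmt16 (L : Type*) [LieRing L] [LieAlgebra ℝ L] (b : Module.Basis (Fin 6) ℝ L)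
    -- bracket relations (X₁ = b 0, X₂ = b 1, Y₁ = b 2, Y₂ = b 3, Z = b 4, W = b 5)
    (hX1Z : ⁅b 0, b 4⁆ = b 0) (hX2Z : ⁅b 1, b 4⁆ = -b 1)
    (hY1Z : ⁅b 2, b 4⁆ = b 2) (hY2Z : ⁅b 3, b 4⁆ = -b 3)
    (h01 : ⁅b 0, b 1⁆ = 0) (h02 : ⁅b 0, b 2⁆ = 0) (h03 : ⁅b 0, b 3⁆ = 0)
    (h05 : ⁅b 0, b 5⁆ = 0) (h12 : ⁅b 1, b 2⁆ = 0) (h13 : ⁅b 1, b 3⁆ = 0)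
    (h15 : ⁅b 1, b 5⁆ = 0) (h23 : ⁅b 2, b 3⁆ = 0) (h25 : ⁅b 2, b 5⁆ = 0)
    (h35 : ⁅b 3, b 5⁆ = 0) (h45 : ⁅b 4, b 5⁆ = 0)
    -- the 2-form ω
    (ω : L →ₗ[ℝ] L →ₗ[ℝ] ℝ) (hAlt : ∀ x : L, ω x x = 0)
    (hw01 : ω (b 0) (b 1) = 1) (hw23 : ω (b 2) (b 3) = 1) (hw45 : ω (b 4) (b 5) = 1)
    (hw02 : ω (b 0) (b 2) = 0) (hw03 : ω (b 0) (b 3) = 0) (hw04 : ω (b 0) (b 4) = 0)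
    (hw05 : ω (b 0) (b 5) = 0) (hw12 : ω (b 1) (b 2) = 0) (hw13 : ω (b 1) (b 3) = 0)
    (hw14 : ω (b 1) (b 4) = 0) (hw15 : ω (b 1) (b 5) = 0) (hw24 : ω (b 2) (b 4) = 0)
    (hw25 : ω (b 2) (b 5) = 0) (hw34 : ω (b 3) (b 4) = 0) (hw35 : ω (b 3) (b 5) = 0)
    -- the complex structure J
    (J : L →ₗ[ℝ] L)
    (hJ0 : J (b 0) = b 2) (hJ2 : J (b 2) = -b 0) (hJ1 : J (b 1) = b 3)
    (hJ3 : J (b 3) = -b 1) (hJ4 : J (b 4) = b 5) (hJ5 : J (b 5) = -b 4) :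
    (∀ x y z : L, ω ⁅x, y⁆ z + ω ⁅y, z⁆ x + ω ⁅z, x⁆ y = 0) ∧
    (∀ x : L, (∀ y : L, ω x y = 0) → x = 0) ∧
    ((∀ x : L, J (J x) = -x) ∧
      ∀ x y : L, ⁅J x, J y⁆ - J ⁅J x, y⁆ - J ⁅x, J y⁆ - ⁅x, y⁆ = 0) ∧
    (∀ x y : L, ω (J x) (J y) = ω x y) := by
  open PseudoKahlerExample in
  -- the entries below the diagonal follow from the given ones by skew-symmetry
  have hlie : ∀ i j, ⁅b i, b j⁆ = lieTable b i j := by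
    intro i j
    fin_cases i <;> fin_cases j <;>
      first
      | (simp [lieTable, zWeight, hX1Z, hX2Z, hY1Z, hY2Z, h01, h02, h03, h05, h12, h13, h15,
          h23, h25, h35, h45]; done)
      | (rw [← lie_skew]
         simp [lieTable, zWeight, hX1Z, hX2Z, hY1Z, hY2Z, h01, h02, h03, h05, h12, h13, h15,
          h23, h25, h35, h45])
  have hω : ∀ i j, ω (b i) (b j) = omegaMatrix i j := by
    intro i j
    fin_cases i <;> fin_cases j <;>
      first
      | (simp [omegaMatrix, hAlt, hw01, hw23, hw45, hw02, hw03, hw04, hw05, hw12, hw13, hw14,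
          hw15, hw24, hw25, hw34, hw35]; done)
      | (rw [← LinearMap.IsAlt.neg hAlt]
         simp [omegaMatrix, hw01, hw23, hw45, hw02, hw03, hw04, hw05, hw12, hw13, hw14,
          hw15, hw24, hw25, hw34, hw35])
  have hJ : ∀ i, J (b i) = jTable b i := by
    intro i
    fin_cases i <;> simpa [jTable]
  exact ⟨lie_cyclic_eq_zero b hlie hω, separatingLeft b hω,
    ⟨LinearMap.congr_fun (comp_self_eq_neg_id b hJ),
      LinearMap.congr_fun₂ (nijenhuisTensor_eq_zero b hlie hJ)⟩,
    LinearMap.congr_fun₂ (compl₁₂_eq_self b hω hJ)⟩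
end
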